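/- Let $X$ and $Y$ be normal $d$-pseudomanifolds ($d \geq 2$) such that $Y$ is obtained from $X$ by starring a new vertex in a facet of $X$. Then $Y$ is a stacked $d$-sphere if and only if $X$ is a stacked $d$-sphere. -/

import Mathlib

open Finset

noncomputable section

attribute [local instance] Classical.propDecidable

variable {V : Type} [DecidableEq V]

/-- A (finite abstract) simplicial complex: a finite family of nonempty finite sets (faces)
closed under taking nonempty subsets. -/
def IsComplex (K : Finset (Finset V)) : Prop :=
  (∀ s ∈ K, s.Nonempty) ∧ ∀ s ∈ K, ∀ t ⊆ s, t.Nonempty → t ∈ K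

/-- The vertex set of a complex: the union of its faces. -/
def vertexSet (K : Finset (Finset V)) : Finset V := K.sup id

/-- A facet is a maximal face. -/
def IsFacet (K : Finset (Finset V)) (s : Finset V) : Prop :=
  s ∈ K ∧ ∀ t ∈ K, s ⊆ t → s = t

/-- A complex is pure of dimension `d` if it is nonempty and every facet has `d + 1` vertices. -/
def IsPure (K : Finset (Finset V)) (d : ℕ) : Prop :=
  K.Nonempty ∧ ∀ s, IsFacet K s → s.card = d + 1

/-- The edge graph (1-skeleton) of a complex. -/
def edgeGraph (K : Finset (Finset V)) : SimpleGraph V where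
  Adj x y := x ≠ y ∧ ({x, y} : Finset V) ∈ K
  symm := by
    constructor
    intro x y h
    refine ⟨h.1.symm, ?_⟩
    rw [Finset.pair_comm]
    exact h.2
  loopless := by
    constructor
    intro x h
    exact h.1 rfl

/-- A complex is connected if it has a vertex and any two of its vertices are joined by a
path in its edge graph. -/
def CConnected (K : Finset (Finset V)) : Prop :=
  (vertexSet K).Nonempty ∧
    ∀ u ∈ vertexSet K, ∀ v ∈ vertexSet K, (edgeGraph K).Reachable u v

/-- The link of a face `α`: all faces `β` disjoint from `α` with `α ∪ β` a face. -/
def link (K : Finset (Finset V)) (α : Finset V) : Finset (Finset V) :=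
  K.filter fun β => Disjoint α β ∧ α ∪ β ∈ K

/-- The number of edges (1-dimensional faces) of a complex. -/
def edgeCount (K : Finset (Finset V)) : ℕ := (K.filter fun s => s.card = 2).card

/-- A weak pseudomanifold of dimension `d`: a pure `d`-dimensional complex in which every
`(d-1)`-dimensional face lies in exactly two facets. -/
def IsWeakPM (K : Finset (Finset V)) (d : ℕ) : Prop :=
  IsComplex K ∧ IsPure K d ∧
    ∀ s ∈ K, s.card = d → (K.filter fun t => IsFacet K t ∧ s ⊆ t).card = 2

/-- A normal `d`-pseudomanifold: a connected weak pseudomanifold of dimension `d` in which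
the link of every face of dimension at most `d - 2` is connected. -/
def IsNormalPM (K : Finset (Finset V)) (d : ℕ) : Prop :=
  IsWeakPM K d ∧ CConnected K ∧
    ∀ s ∈ K, s.card ≤ d - 1 → CConnected (link K s)

/-- The standard `d`-sphere: the complex of all nonempty proper subsets of a `(d+2)`-set. -/
def IsStandardSphere (K : Finset (Finset V)) (d : ℕ) : Prop :=
  ∃ A : Finset V, A.card = d + 2 ∧ K = A.powerset.filter fun s => s.Nonempty ∧ s ≠ A

/-- `StarringOf X Y` : `Y` is obtained from `X` by starring a new vertex `v` in a facet
`σ` of `X`, i.e. by replacing the facet `σ` with the cone with apex `v` over its boundary. -/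
def StarringOf (X Y : Finset (Finset V)) : Prop :=
  ∃ (σ : Finset V) (v : V), IsFacet X σ ∧ v ∉ vertexSet X ∧
    Y = X.erase σ ∪ (σ.powerset.filter fun τ => τ ≠ σ).image fun τ => insert v τ

/-- A stacked `d`-sphere: a complex obtained from the standard `d`-sphere by a finite
sequence of starrings. -/
def IsStackedSphere (K : Finset (Finset V)) (d : ℕ) : Prop :=
  ∃ S : Finset (Finset V), IsStandardSphere S d ∧ Relation.ReflTransGen StarringOf S K

/-- The induced subcomplex on a set `U` of vertices. -/
def induced (K : Finset (Finset V)) (U : Finset V) : Finset (Finset V) :=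
  K.filter fun s => s ⊆ U

/-- The simplicial complement of the induced subcomplex on `U`: the induced subcomplex on
the complementary set of vertices. -/
def simpComplement (K : Finset (Finset V)) (U : Finset V) : Finset (Finset V) :=
  induced K (vertexSet K \ U)

/-- The degree of a vertex: the number of vertices of its link. -/
def vertDegree (K : Finset (Finset V)) (v : V) : ℕ := (vertexSet (link K {v})).card

/-- `farApart G x y` : the distance from `x` to `y` in the graph `G` is at least `3`
(where unreachable counts as infinite distance). -/
def farApart (G : SimpleGraph V) (x y : V) : Prop :=
  x ≠ y ∧ ¬ G.Adj x y ∧ ∀ z : V, ¬ (G.Adj x z ∧ G.Adj z y)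

/-- `Admissible X σ₁ σ₂ ψ` : `σ₁, σ₂` are disjoint facets of `X` and `ψ` restricts to a
bijection from `σ₁` onto `σ₂` moving every `x ∈ σ₁` to distance at least 3 from itself. -/
def Admissible (X : Finset (Finset V)) (σ₁ σ₂ : Finset V) (ψ : V → V) : Prop :=
  IsFacet X σ₁ ∧ IsFacet X σ₂ ∧ Disjoint σ₁ σ₂ ∧ Set.BijOn ψ ↑σ₁ ↑σ₂ ∧
    ∀ x ∈ σ₁, farApart (edgeGraph X) x (ψ x)

/-- Elementary handle addition `X^ψ`: remove the two facets `σ₁, σ₂` and identify each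
`x ∈ σ₁` with `ψ x ∈ σ₂`. -/
def handleAdd (X : Finset (Finset V)) (σ₁ σ₂ : Finset V) (ψ : V → V) :
    Finset (Finset V) :=
  ((X.erase σ₁).erase σ₂).image fun s => s.image fun x => if x ∈ σ₁ then ψ x else x

/-- Isomorphism of simplicial complexes: an injection on vertices carrying the faces of one
complex exactly onto the faces of the other. -/
def CplxIso {W : Type} [DecidableEq W] (K : Finset (Finset V)) (L : Finset (Finset W)) :
    Prop :=
  ∃ f : V → W, Set.InjOn f ↑(vertexSet K) ∧ L = K.image fun s => s.image f

/-- The connected component of the complex `K` containing the vertex `v` (as a subcomplex). -/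
def componentOf (K : Finset (Finset V)) (v : V) : Finset (Finset V) :=
  K.filter fun s => ∀ x ∈ s, (edgeGraph K).Reachable v x

/-- The edges of `M` having exactly one end in `A`. -/
def crossEdges (M : Finset (Finset V)) (A : Finset V) : Finset (Finset V) :=
  M.filter fun e => e.card = 2 ∧ (e ∩ A).card = 1

/-- The graph whose vertices are the edges of `M` with exactly one end in `A`, two of them
being adjacent when the union of the corresponding edges is a 2-dimensional face of `M`. -/
def crossGraph (M : Finset (Finset V)) (A : Finset V) : SimpleGraph (Finset V) where
  Adj e f := e ≠ f ∧ e ∈ crossEdges M A ∧ f ∈ crossEdges M A ∧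
    e ∪ f ∈ M ∧ (e ∪ f).card = 3
  symm := by
    constructor
    intro e f h
    obtain ⟨h1, h2, h3, h4, h5⟩ := h
    exact ⟨h1.symm, h3, h2, by rwa [Finset.union_comm], by rwa [Finset.union_comm]⟩
  loopless := by
    constructor
    intro e h
    exact h.1 rfl

/-- The class `𝒦(d)`: normal `d`-pseudomanifolds all of whose vertex links are stacked
`(d-1)`-spheres. -/
def InClassK (K : Finset (Finset V)) (d : ℕ) : Prop :=
  IsNormalPM K d ∧ ∀ v ∈ vertexSet K, IsStackedSphere (link K {v}) (d - 1)

/-- The total number of partitions of `n`. -/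
def numPartitions (n : ℕ) : ℕ := Fintype.card (Nat.Partition n)

/-- The number of even partitions of `n` (those with an even number of even parts). -/
def numEvenPartitions (n : ℕ) : ℕ :=
  Fintype.card {p : Nat.Partition n // Even (Multiset.card (p.parts.filter fun i => Even i))}

/-- The number of odd partitions of `n` (those with an odd number of even parts). -/
def numOddPartitions (n : ℕ) : ℕ :=
  Fintype.card {p : Nat.Partition n // Odd (Multiset.card (p.parts.filter fun i => Even i))}

/-- The facets of `N^{d+1}_{m+d+1}` : the sets of `d+2` consecutive integers inside
`{1, …, m+d+1}`. -/
def NFacets (d m : ℕ) : Finset (Finset ℕ) :=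
  (Finset.Icc 1 m).image fun k => Finset.Icc k (k + d + 1)

/-- The complex `N^{d+1}_{m+d+1}` on vertex set `{1, …, m+d+1}` whose facets are the sets
of `d+2` consecutive integers. -/
def Ncomplex (d m : ℕ) : Finset (Finset ℕ) :=
  ((NFacets d m).biUnion Finset.powerset).filter fun s => s.Nonempty

/-- The facets of the boundary complex `∂N^{d+1}_{m+d+1}` : the `(d+1)`-element subsets of
`{1, …, m+d+1}` contained in exactly one facet of `N^{d+1}_{m+d+1}`. -/
def boundaryNFacets (d m : ℕ) : Finset (Finset ℕ) :=
  (Finset.Icc 1 (m + d + 1)).powerset.filter fun s =>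
    s.card = d + 1 ∧ ((Finset.Icc 1 m).filter fun k => s ⊆ Finset.Icc k (k + d + 1)).card = 1

/-- The boundary complex `∂N^{d+1}_{m+d+1}`. -/
def boundaryN (d m : ℕ) : Finset (Finset ℕ) :=
  ((boundaryNFacets d m).biUnion Finset.powerset).filter fun s => s.Nonempty

/-!
Un-starring is well defined on stacked spheres. Suppose `Y` arises from a standard sphere by a
chain of starrings and also looks like a starring at `v` in `σ`; we show `unstar Y σ v` is
stacked by induction on the chain. The standard sphere is not a starring of anything. If the
last starring of the chain is at `v₁` in `σ₁`, then either `v₁ = v`, and then `σ₁ = σ` and the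
two un-starrings agree; or `σ₁ = σ`, and the two un-starrings differ by the transposition of
`v₁` and `v`; or, since `d ≥ 2` forces `v₁ ∉ σ` and `v ∉ σ₁`, the two un-starrings commute:
by induction `v` can be undone before the last starring, and starring `v₁` back in then
yields `unstar Y σ v`.
-/

lemma mem_vertexSet {K : Finset (Finset V)} {a : V} : a ∈ vertexSet K ↔ ∃ s ∈ K, a ∈ s := by
  simp [vertexSet, Finset.mem_sup]

lemma notMem_of_notMem_vertexSet {K : Finset (Finset V)} {s : Finset V} {v : V}
    (hv : v ∉ vertexSet K) (hs : s ∈ K) : v ∉ s :=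
  fun hvs => hv (mem_vertexSet.2 ⟨s, hs, hvs⟩)

lemma exists_isFacet_superset {α : Type} {K : Finset (Finset α)} {s : Finset α} (hs : s ∈ K) :
    ∃ t, IsFacet K t ∧ s ⊆ t := by
  obtain ⟨t, hst, ht, hmax⟩ := K.exists_le_maximal hs
  exact ⟨t, ⟨ht, fun u hu htu => (hmax hu htu).antisymm htu |>.symm⟩, hst⟩

lemma IsPure.card_le {α : Type} {K : Finset (Finset α)} {d : ℕ} (hK : IsPure K d)
    {s : Finset α} (hs : s ∈ K) : s.card ≤ d + 1 := by
  obtain ⟨t, ht, hst⟩ := exists_isFacet_superset hs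
  exact hK.2 t ht ▸ card_le_card hst

def starring (X : Finset (Finset V)) (σ : Finset V) (v : V) : Finset (Finset V) :=
  X.erase σ ∪ (σ.powerset.filter fun τ => τ ≠ σ).image fun τ => insert v τ

lemma starringOf_iff {X Y : Finset (Finset V)} :
    StarringOf X Y ↔ ∃ σ v, IsFacet X σ ∧ v ∉ vertexSet X ∧ Y = starring X σ v :=
  Iff.rfl

lemma mem_starring {X : Finset (Finset V)} {σ s : Finset V} {v : V} :
    s ∈ starring X σ v ↔ s ∈ X ∧ s ≠ σ ∨ ∃ τ ⊂ σ, s = insert v τ := by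
  simp only [starring, mem_union, mem_erase, mem_image, mem_filter, mem_powerset,
    ssubset_iff_subset_ne]
  aesop

def unstar (K : Finset (Finset V)) (σ : Finset V) (v : V) : Finset (Finset V) :=
  insert σ (K.filter fun s => v ∉ s)

lemma mem_unstar {K : Finset (Finset V)} {σ s : Finset V} {v : V} :
    s ∈ unstar K σ v ↔ s = σ ∨ s ∈ K ∧ v ∉ s := by
  simp [unstar]

lemma unstar_comm {K : Finset (Finset V)} {σ₁ σ₂ : Finset V} {v₁ v₂ : V}
    (h₁₂ : v₁ ∉ σ₂) (h₂₁ : v₂ ∉ σ₁) :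
    unstar (unstar K σ₁ v₁) σ₂ v₂ = unstar (unstar K σ₂ v₂) σ₁ v₁ := by
  simp only [unstar, filter_insert, h₁₂, h₂₁, not_false_eq_true, if_true, filter_filter]
  rw [insert_comm]
  simp only [and_comm]

/-- The faces through `v` form the cone from `v` over the boundary of `σ`, which is missing;
this is what `K = starring X σ v` looks like locally. -/
def IsStarredAt (K : Finset (Finset V)) (σ : Finset V) (v : V) : Prop :=
  v ∉ σ ∧ σ ∉ K ∧ ∀ s, s ∈ K ∧ v ∈ s ↔ ∃ τ ⊂ σ, s = insert v τ

lemma isStarredAt_starring {X : Finset (Finset V)} {σ : Finset V} {v : V} (hσ : σ ∈ X)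
    (hv : v ∉ vertexSet X) : IsStarredAt (starring X σ v) σ v := by
  have hvσ : v ∉ σ := notMem_of_notMem_vertexSet hv hσ
  refine ⟨hvσ, fun h => ?_, fun s => ?_⟩
  · obtain ⟨-, hne⟩ | ⟨τ, -, hτ⟩ := mem_starring.1 h
    · exact hne rfl
    · exact hvσ (hτ ▸ mem_insert_self v τ)
  · rw [mem_starring]
    constructor
    · rintro ⟨⟨hs, -⟩ | hs, hvs⟩
      · exact absurd hvs (notMem_of_notMem_vertexSet hv hs)
      · exact hs
    · rintro ⟨τ, hτ, rfl⟩
      exact ⟨Or.inr ⟨τ, hτ, rfl⟩, mem_insert_self v τ⟩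

lemma unstar_starring {X : Finset (Finset V)} {σ : Finset V} {v : V} (hσ : σ ∈ X)
    (hv : v ∉ vertexSet X) : unstar (starring X σ v) σ v = X := by
  ext s
  rw [mem_unstar, mem_starring]
  constructor
  · rintro (rfl | ⟨⟨hs, -⟩ | ⟨τ, -, rfl⟩, hvs⟩)
    · exact hσ
    · exact hs
    · exact absurd (mem_insert_self v τ) hvs
  · intro hs
    by_cases hsσ : s = σ
    · exact Or.inl hsσ
    · exact Or.inr ⟨Or.inl ⟨hs, hsσ⟩, notMem_of_notMem_vertexSet hv hs⟩

lemma IsStarredAt.starring_unstar {K : Finset (Finset V)} {σ : Finset V} {v : V}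
    (h : IsStarredAt K σ v) : starring (unstar K σ v) σ v = K := by
  obtain ⟨-, hσK, hcone⟩ := h
  ext s
  rw [mem_starring, mem_unstar, ← hcone]
  by_cases hvs : v ∈ s
  · simp only [hvs, not_true_eq_false, and_false, or_false, and_true, ne_eq, and_not_self,
      false_or]
  · simp only [hvs, not_false_eq_true, and_true, and_false, or_false]
    exact ⟨fun ⟨h, hne⟩ => h.resolve_left hne, fun hs => ⟨Or.inr hs, fun h => hσK (h ▸ hs)⟩⟩

lemma IsStarredAt.starringOf_unstar {K : Finset (Finset V)} {σ : Finset V} {v : V}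
    (h : IsStarredAt K σ v) (hK : ∀ s ∈ K, s.card ≤ σ.card) : StarringOf (unstar K σ v) K := by
  refine ⟨σ, v, ⟨mem_unstar.2 (Or.inl rfl), fun t ht hσt => ?_⟩, fun hv => ?_,
    h.starring_unstar.symm⟩
  · obtain rfl | ⟨ht, -⟩ := mem_unstar.1 ht
    · rfl
    · exact eq_of_subset_of_card_le hσt (hK t ht)
  · obtain ⟨s, hs, hvs⟩ := mem_vertexSet.1 hv
    obtain rfl | ⟨-, hvs'⟩ := mem_unstar.1 hs
    · exact h.1 hvs
    · exact hvs' hvs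

lemma IsStandardSphere.isPure {S : Finset (Finset V)} {d : ℕ} (hS : IsStandardSphere S d) :
    IsPure S d := by
  obtain ⟨A, hA, rfl⟩ := hS
  have mem_iff : ∀ s, s ∈ A.powerset.filter (fun s => s.Nonempty ∧ s ≠ A) ↔
      s ⊆ A ∧ s.Nonempty ∧ s ≠ A := by simp
  obtain ⟨a, ha⟩ : A.Nonempty := card_pos.1 (by omega)
  have herase : ∀ x ∈ A, A.erase x ⊆ A ∧ (A.erase x).Nonempty ∧ A.erase x ≠ A :=
    fun x hx => ⟨erase_subset x A, card_pos.1 (by rw [card_erase_of_mem hx]; omega),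
      (erase_ssubset hx).ne⟩
  refine ⟨⟨A.erase a, (mem_iff _).2 (herase a ha)⟩, fun s ⟨hs, hmax⟩ => ?_⟩
  obtain ⟨hsA, -, hne⟩ := (mem_iff s).1 hs
  obtain ⟨x, hxA, hxs⟩ := exists_of_ssubset (hsA.ssubset_of_ne hne)
  -- a facet is contained in, hence equal to, some `A.erase x`
  have hsx : s = A.erase x :=
    hmax _ ((mem_iff _).2 (herase x hxA)) fun y hy => mem_erase.2 ⟨fun h => hxs (h ▸ hy), hsA hy⟩
  rw [hsx, card_erase_of_mem hxA]
  omega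

lemma isPure_starring {X : Finset (Finset V)} {σ : Finset V} {v : V} {d : ℕ} (hX : IsPure X d)
    (hσ : IsFacet X σ) (hv : v ∉ vertexSet X) : IsPure (starring X σ v) d := by
  have hcard : σ.card = d + 1 := hX.2 σ hσ
  have hvσ : v ∉ σ := notMem_of_notMem_vertexSet hv hσ.1
  refine ⟨⟨insert v ∅, mem_starring.2 (Or.inr ⟨∅, ?_, rfl⟩)⟩, fun t ⟨ht, hmax⟩ => ?_⟩
  · exact empty_ssubset.2 (card_pos.1 (by omega))
  obtain ⟨htX, htσ⟩ | ⟨τ, hτ, rfl⟩ := mem_starring.1 ht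
  · obtain ⟨u, hu, htu⟩ := exists_isFacet_superset htX
    by_cases huσ : u = σ
    · subst huσ
      have hcone : insert v t ∈ starring X u v :=
        mem_starring.2 (Or.inr ⟨t, htu.ssubset_of_ne htσ, rfl⟩)
      refine absurd ?_ (notMem_of_notMem_vertexSet hv htX)
      rw [hmax _ hcone (subset_insert v t)]
      exact mem_insert_self v t
    · rw [hmax u (mem_starring.2 (Or.inl ⟨hu.1, huσ⟩)) htu]
      exact hX.2 u hu
  · obtain ⟨x, hxσ, hxτ⟩ := exists_of_ssubset hτ
    have hτx : τ ⊆ σ.erase x := fun y hy => mem_erase.2 ⟨fun h => hxτ (h ▸ hy), hτ.subset hy⟩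
    have hcone : insert v (σ.erase x) ∈ starring X σ v :=
      mem_starring.2 (Or.inr ⟨σ.erase x, erase_ssubset hxσ, rfl⟩)
    rw [hmax _ hcone (insert_subset_insert v hτx),
      card_insert_of_notMem fun h => hvσ (mem_of_mem_erase h), card_erase_of_mem hxσ, hcard]
    omega

lemma IsStackedSphere.isPure {K : Finset (Finset V)} {d : ℕ} (hK : IsStackedSphere K d) :
    IsPure K d := by
  obtain ⟨S, hS, hSK⟩ := hK
  induction hSK with
  | refl => exact hS.isPure
  | tail _ hstep ih =>
    obtain ⟨σ, v, hσ, hv, rfl⟩ := hstep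
    exact isPure_starring ih hσ hv

lemma IsStackedSphere.of_starringOf {X Y : Finset (Finset V)} {d : ℕ} (hX : IsStackedSphere X d)
    (hXY : StarringOf X Y) : IsStackedSphere Y d :=
  let ⟨S, hS, hSX⟩ := hX
  ⟨S, hS, hSX.tail hXY⟩

section Relabel

variable {W : Type} [DecidableEq W]

def relabel (f : V ↪ W) (K : Finset (Finset V)) : Finset (Finset W) :=
  K.image (Finset.map f)

lemma relabel_starring (f : V ↪ W) (X : Finset (Finset V)) (σ : Finset V) (v : V) :
    relabel f (starring X σ v) = starring (relabel f X) (σ.map f) (f v) := by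
  ext t
  simp only [relabel, mem_image, mem_starring]
  constructor
  · rintro ⟨s, ⟨hs, hsσ⟩ | ⟨τ, hτ, rfl⟩, rfl⟩
    · exact Or.inl ⟨⟨s, hs, rfl⟩, fun h => hsσ (map_inj.1 h)⟩
    · exact Or.inr ⟨τ.map f, map_ssubset_map.2 hτ, map_insert f v τ⟩
  · rintro (⟨⟨s, hs, rfl⟩, hsσ⟩ | ⟨τ, hτ, rfl⟩)
    · exact ⟨s, Or.inl ⟨hs, fun h => hsσ (h ▸ rfl)⟩, rfl⟩
    · obtain ⟨τ, -, rfl⟩ := subset_map_iff.1 hτ.subset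
      exact ⟨insert v τ, Or.inr ⟨τ, map_ssubset_map.1 hτ, rfl⟩, map_insert f v τ⟩

lemma StarringOf.relabel {X Y : Finset (Finset V)} (f : V ↪ W) (h : StarringOf X Y) :
    StarringOf (relabel f X) (relabel f Y) := by
  obtain ⟨σ, v, ⟨hσ, hmax⟩, hv, rfl⟩ := h
  refine ⟨σ.map f, f v, ⟨mem_image_of_mem _ hσ, ?_⟩, ?_, relabel_starring f X σ v⟩
  · rintro t ht hσt
    obtain ⟨s, hs, rfl⟩ := mem_image.1 ht
    rw [hmax s hs (map_subset_map.1 hσt)]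
  · rw [mem_vertexSet]
    rintro ⟨t, ht, hvt⟩
    obtain ⟨s, hs, rfl⟩ := mem_image.1 ht
    exact notMem_of_notMem_vertexSet hv hs ((mem_map' f).1 hvt)

lemma IsStandardSphere.relabel {S : Finset (Finset V)} {d : ℕ} (f : V ↪ W)
    (hS : IsStandardSphere S d) : IsStandardSphere (relabel f S) d := by
  obtain ⟨A, hA, rfl⟩ := hS
  refine ⟨A.map f, by rw [card_map, hA], ?_⟩
  ext t
  simp only [_root_.relabel, mem_image, mem_filter, mem_powerset]
  constructor
  · rintro ⟨s, ⟨hsA, hs, hsA'⟩, rfl⟩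
    exact ⟨map_subset_map.2 hsA, hs.map, fun h => hsA' (map_inj.1 h)⟩
  · rintro ⟨htA, ht, htA'⟩
    obtain ⟨s, hsA, rfl⟩ := subset_map_iff.1 htA
    exact ⟨s, ⟨hsA, map_nonempty.1 ht, fun h => htA' (h ▸ rfl)⟩, rfl⟩

lemma IsStackedSphere.relabel {K : Finset (Finset V)} {d : ℕ} (f : V ↪ W)
    (hK : IsStackedSphere K d) : IsStackedSphere (relabel f K) d := by
  obtain ⟨S, hS, hSK⟩ := hK
  exact ⟨_, hS.relabel f, hSK.lift (p := StarringOf) (_root_.relabel f) fun _ _ h => h.relabel f⟩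

end Relabel

lemma map_swap_eq_self {a b : V} {s : Finset V} (ha : a ∉ s) (hb : b ∉ s) :
    s.map (Equiv.swap a b).toEmbedding = s := by
  rw [map_eq_image]
  conv_rhs => rw [← image_id (s := s)]
  refine image_congr fun x hx => Equiv.swap_apply_of_ne_of_ne ?_ ?_ <;> rintro rfl <;> contradiction

namespace IsStarredAt

variable {K : Finset (Finset V)} {σ σ₁ σ₂ : Finset V} {v v₁ v₂ : V}

lemma insert_mem (h : IsStarredAt K σ v) {τ : Finset V} (hτ : τ ⊂ σ) : insert v τ ∈ K :=
  ((h.2.2 _).2 ⟨τ, hτ, rfl⟩).1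

lemma subset (h₁ : IsStarredAt K σ₁ v) (h₂ : IsStarredAt K σ₂ v) (hσ₁ : 2 ≤ σ₁.card) :
    σ₁ ⊆ σ₂ := by
  intro x hx
  obtain ⟨y, hy⟩ : (σ₁.erase x).Nonempty := card_pos.1 (by rw [card_erase_of_mem hx]; omega)
  have hxy : x ∈ σ₁.erase y := mem_erase.2 ⟨(ne_of_mem_erase hy).symm, hx⟩
  obtain ⟨τ, hτ, hτeq⟩ :=
    (h₂.2.2 _).1 ⟨h₁.insert_mem (erase_ssubset (mem_of_mem_erase hy)), mem_insert_self v _⟩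
  have hxτ : x ∈ insert v τ := hτeq ▸ mem_insert_of_mem hxy
  exact hτ.subset ((mem_insert.1 hxτ).resolve_left fun h => h₁.1 (h ▸ hx))

/-- If `v₁ ∈ σ₂`, each edge `{v₁, x}` of `σ₂` is a proper face of `σ₂` (as `3 ≤ σ₂.card`), so
the triangle `{v₂, v₁, x}` is a face through `v₁`; this puts `σ₂ \ {v₁}` and `v₂` inside `σ₁`,
and then `σ₂ = insert v₁ (σ₂ \ {v₁})` would be a face. -/
lemma notMem_of_ne (h₁ : IsStarredAt K σ₁ v₁) (h₂ : IsStarredAt K σ₂ v₂) (hv : v₁ ≠ v₂)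
    (hσ₂ : 3 ≤ σ₂.card) : v₁ ∉ σ₂ := by
  intro hv₁
  have htriangle : ∀ x ∈ σ₂.erase v₁, x ∈ σ₁ ∧ v₂ ∈ σ₁ := by
    intro x hx
    have hedge : {v₁, x} ⊂ σ₂ := by
      refine ssubset_of_subset_of_ne (insert_subset hv₁ (singleton_subset_iff.2
        (mem_of_mem_erase hx))) fun h => ?_
      have := card_le_two (a := v₁) (b := x)
      rw [h] at this
      omega
    obtain ⟨τ, hτ, hτeq⟩ := (h₁.2.2 _).1 ⟨h₂.insert_mem hedge, by simp⟩
    have hsub : ({v₂, v₁, x} : Finset V) ⊆ insert v₁ τ := by rw [← hτeq]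
    have hmem : ∀ y ∈ ({v₂, x} : Finset V), y ∈ τ := by
      intro y hy
      refine (mem_insert.1 (hsub (by simp at hy ⊢; tauto))).resolve_left ?_
      rcases mem_insert.1 hy with rfl | hy
      · exact hv.symm
      · exact (mem_singleton.1 hy) ▸ ne_of_mem_erase hx
    exact ⟨hτ.subset (hmem x (by simp)), hτ.subset (hmem v₂ (by simp))⟩
  obtain ⟨x, hx⟩ : (σ₂.erase v₁).Nonempty := card_pos.1 (by rw [card_erase_of_mem hv₁]; omega)
  have hface : σ₂.erase v₁ ⊂ σ₁ :=
    ssubset_of_subset_of_ne (fun y hy => (htriangle y hy).1) fun h =>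
      h₂.1 (mem_of_mem_erase (h ▸ (htriangle x hx).2))
  exact h₂.2.1 (insert_erase hv₁ ▸ h₁.insert_mem hface)

lemma unstar_of_ne (h : IsStarredAt K σ₂ v₂) (hv : v₁ ≠ v₂) (h₁₂ : v₁ ∉ σ₂) (h₂₁ : v₂ ∉ σ₁)
    (hσ : σ₁ ≠ σ₂) : IsStarredAt (_root_.unstar K σ₁ v₁) σ₂ v₂ := by
  refine ⟨h.1, fun hσ₂ => ?_, fun s => ?_⟩
  · obtain hσ₂ | ⟨hσ₂, -⟩ := mem_unstar.1 hσ₂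
    · exact hσ hσ₂.symm
    · exact h.2.1 hσ₂
  · rw [mem_unstar, ← h.2.2]
    constructor
    · rintro ⟨rfl | ⟨hs, -⟩, hv₂⟩
      · exact absurd hv₂ h₂₁
      · exact ⟨hs, hv₂⟩
    · rintro ⟨hs, hv₂⟩
      refine ⟨Or.inr ⟨hs, fun hv₁ => ?_⟩, hv₂⟩
      obtain ⟨τ, hτ, rfl⟩ := (h.2.2 s).1 ⟨hs, hv₂⟩
      exact (mem_insert.1 hv₁).elim hv fun h => h₁₂ (hτ.subset h)

lemma map_swap_mem_unstar (h₁ : IsStarredAt K σ v₁) (h₂ : IsStarredAt K σ v₂) (hv : v₁ ≠ v₂)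
    {s : Finset V} (hs : s ∈ unstar K σ v₁) :
    s.map (Equiv.swap v₁ v₂).toEmbedding ∈ unstar K σ v₂ := by
  rw [mem_unstar] at hs ⊢
  obtain rfl | ⟨hs, hv₁⟩ := hs
  · exact Or.inl (map_swap_eq_self h₁.1 h₂.1)
  by_cases hv₂ : v₂ ∈ s
  · obtain ⟨τ, hτ, rfl⟩ := (h₂.2.2 s).1 ⟨hs, hv₂⟩
    have hτv₁ : v₁ ∉ τ := fun h => h₁.1 (hτ.subset h)
    have hτv₂ : v₂ ∉ τ := fun h => h₂.1 (hτ.subset h)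
    rw [map_insert, map_swap_eq_self hτv₁ hτv₂, Equiv.toEmbedding_apply, Equiv.swap_apply_right]
    exact Or.inr ⟨h₁.insert_mem hτ, fun h => (mem_insert.1 h).elim hv.symm hτv₂⟩
  · rw [map_swap_eq_self hv₁ hv₂]
    exact Or.inr ⟨hs, hv₂⟩

lemma unstar_eq_relabel_swap (h₁ : IsStarredAt K σ v₁) (h₂ : IsStarredAt K σ v₂)
    (hv : v₁ ≠ v₂) : unstar K σ v₂ = relabel (Equiv.swap v₁ v₂).toEmbedding (unstar K σ v₁) := by
  ext t
  refine ⟨fun ht => mem_image.2 ⟨t.map (Equiv.swap v₁ v₂).toEmbedding, ?_, ?_⟩, fun ht => ?_⟩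
  · rw [Equiv.swap_comm]
    exact h₂.map_swap_mem_unstar h₁ hv.symm ht
  · rw [map_map, ← Equiv.trans_toEmbedding, Equiv.swap_swap, Equiv.refl_toEmbedding, map_refl]
  · obtain ⟨s, hs, rfl⟩ := mem_image.1 ht
    exact h₁.map_swap_mem_unstar h₂ hv hs

end IsStarredAt

lemma IsStandardSphere.not_isStarredAt {S : Finset (Finset V)} {σ : Finset V} {v : V} {d : ℕ}
    (hS : IsStandardSphere S d) (hd : 1 ≤ d) (hσ : σ.card = d + 1) : ¬ IsStarredAt S σ v := by
  obtain ⟨A, hA, rfl⟩ := hS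
  intro h
  have hsubA : ∀ {τ}, τ ⊂ σ → insert v τ ⊆ A := fun hτ =>
    (mem_powerset.1 (mem_filter.1 (h.insert_mem hτ)).1)
  have hvA : v ∈ A := hsubA (empty_ssubset.2 (card_pos.1 (by omega))) (mem_insert_self v ∅)
  -- the edges `{v, x}` place `σ` inside `A \ {v}`, which has the same size
  have hσA : σ = A.erase v := by
    refine eq_of_subset_of_card_le (fun x hx => mem_erase.2 ⟨fun hxv => h.1 (hxv ▸ hx), ?_⟩) ?_
    · have hx' : {x} ⊂ σ := ssubset_of_subset_of_ne (singleton_subset_iff.2 hx) fun h => by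
        rw [← h, card_singleton] at hσ
        omega
      exact hsubA hx' (mem_insert_of_mem (mem_singleton_self x))
    · rw [card_erase_of_mem hvA, hA, hσ]
      omega
  refine h.2.1 (mem_filter.2 ⟨mem_powerset.2 (hσA ▸ erase_subset v A), ?_, ?_⟩)
  · exact card_pos.1 (by omega)
  · exact hσA ▸ (erase_ssubset hvA).ne

theorem isStackedSphere_unstar {Y : Finset (Finset V)} {σ : Finset V} {v : V} {d : ℕ}
    (hd : 2 ≤ d) (hY : IsStackedSphere Y d) (h : IsStarredAt Y σ v) (hσ : σ.card = d + 1) :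
    IsStackedSphere (unstar Y σ v) d := by
  obtain ⟨S, hS, hSY⟩ := hY
  induction hSY generalizing σ v with
  | refl => exact absurd h (hS.not_isStarredAt (by omega) hσ)
  | @tail Z Y hSZ hZY ih =>
    have hZ : IsStackedSphere Z d := ⟨S, hS, hSZ⟩
    have hYpure : IsPure Y d := (hZ.of_starringOf hZY).isPure
    obtain ⟨σ₁, v₁, hσ₁, hv₁, hYeq⟩ := starringOf_iff.1 hZY
    subst hYeq
    have h₁ : IsStarredAt (starring Z σ₁ v₁) σ₁ v₁ := isStarredAt_starring hσ₁.1 hv₁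
    have hcard₁ : σ₁.card = d + 1 := hZ.isPure.2 σ₁ hσ₁
    have hZeq : unstar (starring Z σ₁ v₁) σ₁ v₁ = Z := unstar_starring hσ₁.1 hv₁
    rcases eq_or_ne v₁ v with rfl | hv
    · have hσσ₁ : σ = σ₁ := (h.subset h₁ (by omega)).antisymm (h₁.subset h (by omega))
      rwa [hσσ₁, hZeq]
    rcases eq_or_ne σ₁ σ with rfl | hσ₁σ
    · rw [h₁.unstar_eq_relabel_swap h hv, hZeq]
      exact hZ.relabel _
    have hv₁σ : v₁ ∉ σ := h₁.notMem_of_ne h hv (by omega)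
    have hvσ₁ : v ∉ σ₁ := h.notMem_of_ne h₁ hv.symm (by omega)
    have hW := ih (hZeq ▸ h.unstar_of_ne hv hv₁σ hvσ₁ hσ₁σ) hσ
    rw [← hZeq, unstar_comm hv₁σ hvσ₁] at hW
    refine hW.of_starringOf ((h₁.unstar_of_ne hv.symm hvσ₁ hv₁σ hσ₁σ.symm).starringOf_unstar ?_)
    intro s hs
    obtain rfl | ⟨hs, -⟩ := mem_unstar.1 hs
    · rw [hσ, hcard₁]
    · exact hcard₁ ▸ hYpure.card_le hs

theorem stmt9_general {V : Type} [DecidableEq V] (d : ℕ) (hd : 2 ≤ d)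
    (X Y : Finset (Finset V)) (hX : IsNormalPM X d)
    (hXY : StarringOf X Y) :
    IsStackedSphere Y d ↔ IsStackedSphere X d := by
  refine ⟨fun hY => ?_, fun hX' => hX'.of_starringOf hXY⟩
  obtain ⟨σ, v, hσ, hv, rfl⟩ := hXY
  rw [← unstar_starring hσ.1 hv]
  exact isStackedSphere_unstar hd hY (isStarredAt_starring hσ.1 hv) (hX.1.2.1.2 σ hσ)

/-- If the normal `d`-pseudomanifold `Y` is obtained from the normal `d`-pseudomanifold
`X` by starring a new vertex in a facet, then `Y` is a stacked `d`-sphere iff `X` is. -/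
theorem stmt9 {V : Type} [DecidableEq V] (d : ℕ) (hd : 2 ≤ d)
    (X Y : Finset (Finset V)) (hX : IsNormalPM X d) (hY : IsNormalPM Y d)
    (hXY : StarringOf X Y) :
    IsStackedSphere Y d ↔ IsStackedSphere X d :=
  stmt9_general d hd X Y hX hXY

end
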